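/- arXiv:1707.07801 — 3 statements merged into one kernel-verified Lean document; each statement's English description precedes it below -/
import Mathlib

section
/- Let F be a safe function, P a ground protocol that is F-increasing, (N₁,s₁),…,(Nₙ,sₙ) a valid trace of P from initial knowledge K₀, and α an atom with ¬(⌜K(I)⌝ ⊒ ⌜α⌝). Then for every index 0 ≤ i ≤ n, the intruder knowledge Kᵢ = K₀ ∪ {s₁,…,sᵢ} satisfies F(α, Kᵢ) ⊒ ⌜α⌝ ⊓ F(α, K₀). -/
/-- Messages: atoms, pairs, and encryptions (`enc m k` encrypts `m` with key `k`). -/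
inductive Msg (Atom : Type) : Type
  | atom : Atom → Msg Atom
  | pair : Msg Atom → Msg Atom → Msg Atom
  | enc  : Msg Atom → Atom → Msg Atom

namespace Msg

/-- The set `𝒜(m)` of atoms occurring in a message. -/
def atoms {Atom : Type} : Msg Atom → Set Atom
  | atom a => {a}
  | pair m₁ m₂ => m₁.atoms ∪ m₂.atoms
  | enc m k => m.atoms ∪ {k}

end Msg

/-- The set `𝒜(M)` of atoms occurring in a set of messages. -/
def atomsOf {Atom : Type} (M : Set (Msg Atom)) : Set Atom := ⋃ m ∈ M, m.atoms

/-- Dolev–Yao deduction `M ⊢ m`, relative to a set of keys and a key-inverse map. -/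
inductive Deduces {Atom : Type} (Key : Set Atom) (inv : Atom → Atom)
    (M : Set (Msg Atom)) : Msg Atom → Prop
  | ax {m} (h : m ∈ M) : Deduces Key inv M m
  | pair {m₁ m₂} (h₁ : Deduces Key inv M m₁) (h₂ : Deduces Key inv M m₂) :
      Deduces Key inv M (Msg.pair m₁ m₂)
  | fst {m₁ m₂} (h : Deduces Key inv M (Msg.pair m₁ m₂)) : Deduces Key inv M m₁
  | snd {m₁ m₂} (h : Deduces Key inv M (Msg.pair m₁ m₂)) : Deduces Key inv M m₂
  | enc {m k} (hk : k ∈ Key) (h : Deduces Key inv M m)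
      (hkey : Deduces Key inv M (Msg.atom k)) : Deduces Key inv M (Msg.enc m k)
  | dec {m k} (hk : k ∈ Key) (h : Deduces Key inv M (Msg.enc m k))
      (hkey : Deduces Key inv M (Msg.atom (inv k))) : Deduces Key inv M m

/-- A well-formed function on atoms and sets of messages. -/
def WellFormed {Atom L : Type} [CompleteLattice L]
    (F : Atom → Set (Msg Atom) → L) : Prop :=
  (∀ α : Atom, F α {Msg.atom α} = ⊥) ∧
  (∀ (α : Atom) (M : Set (Msg Atom)), α ∉ atomsOf M → F α M = ⊤) ∧
  (∀ (α : Atom) (M₁ M₂ : Set (Msg Atom)), F α (M₁ ∪ M₂) = F α M₁ ⊓ F α M₂)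

/-- A full-invariant-by-intruder function: deduction cannot lower the level of an
atom unless the intruder is authorized to know it (`⌜K(I)⌝ ⊒ ⌜α⌝`). -/
def FullInvariant {Atom L : Type} [CompleteLattice L] (Key : Set Atom) (inv : Atom → Atom)
    (lvl : Atom → L) (KI : L) (F : Atom → Set (Msg Atom) → L) : Prop :=
  ∀ (M : Set (Msg Atom)) (m : Msg Atom), Deduces Key inv M m →
    ∀ α ∈ m.atoms, F α M ≤ F α {m} ∨ lvl α ≤ KI

/-- A safe function: well-formed and full-invariant-by-intruder. -/
def Safe {Atom L : Type} [CompleteLattice L] (Key : Set Atom) (inv : Atom → Atom)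
    (lvl : Atom → L) (KI : L) (F : Atom → Set (Msg Atom) → L) : Prop :=
  WellFormed F ∧ FullInvariant Key inv lvl KI F

/-- A ground protocol `P` is `F`-increasing: for each step `(N, s)` and each atom `α` of `s`,
`F(α, s) ⊒ ⌜α⌝ ⊓ F(α, N)`. -/
def Increasing {Atom L : Type} [CompleteLattice L] (lvl : Atom → L)
    (F : Atom → Set (Msg Atom) → L) (P : Set (Set (Msg Atom) × Msg Atom)) : Prop :=
  ∀ st ∈ P, ∀ α ∈ (Prod.snd st).atoms, lvl α ⊓ F α st.1 ≤ F α {st.2}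

/-- The intruder knowledge `Kᵢ = K₀ ∪ {s₁, …, sᵢ}` after the first `i` steps of a trace. -/
def knowAfter {Atom : Type} (K₀ : Set (Msg Atom))
    (tr : List (Set (Msg Atom) × Msg Atom)) (i : ℕ) : Set (Msg Atom) :=
  K₀ ∪ { m | ∃ st ∈ tr.take i, st.2 = m }

/-- A valid trace of protocol `P` from initial knowledge `K₀`: every step belongs to `P`
and each received message of step `i+1` is deducible from `Kᵢ`. -/
def ValidTrace {Atom : Type} (Key : Set Atom) (inv : Atom → Atom)
    (P : Set (Set (Msg Atom) × Msg Atom)) (K₀ : Set (Msg Atom))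
    (tr : List (Set (Msg Atom) × Msg Atom)) : Prop :=
  ∀ (i : ℕ) (hi : i < tr.length), tr.get ⟨i, hi⟩ ∈ P ∧
    ∀ m ∈ (tr.get ⟨i, hi⟩).1, Deduces Key inv (knowAfter K₀ tr i) m

/-! Induction along the trace. The received messages `Nᵢ₊₁` are deducible from `Kᵢ`, so by
full invariance (the case `⌜K(I)⌝ ⊒ ⌜α⌝` being excluded) and finiteness of `Nᵢ₊₁`,
`F(α, Nᵢ₊₁) ⊒ F(α, Kᵢ)`; the increasing property then gives
`F(α, sᵢ₊₁) ⊒ ⌜α⌝ ⊓ F(α, Kᵢ) ⊒ ⌜α⌝ ⊓ F(α, K₀)`, and `F(α, Kᵢ₊₁) = F(α, Kᵢ) ⊓ F(α, sᵢ₊₁)`. -/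

section Levels

variable {Atom L : Type} [CompleteLattice L] {F : Atom → Set (Msg Atom) → L}

namespace WellFormed

variable (hF : WellFormed F)
include hF

theorem singleton_eq_top_of_notMem_atoms {α : Atom} {m : Msg Atom} (h : α ∉ m.atoms) :
    F α {m} = ⊤ :=
  hF.2.1 α {m} (by simpa [atomsOf] using h)

theorem le_of_forall_le_singleton (α : Atom) {S : Set (Msg Atom)} (hS : S.Finite) {c : L}
    (h : ∀ m ∈ S, c ≤ F α {m}) : c ≤ F α S := by
  induction S, hS using Set.Finite.induction_on with
  | empty => simp [hF.2.1 α ∅ (by simp [atomsOf])]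
  | @insert m S _ _ ih =>
    rw [Set.insert_eq, hF.2.2]
    exact le_inf (h m (Set.mem_insert m S)) (ih fun x hx => h x (Set.mem_insert_of_mem m hx))

end WellFormed

namespace Safe

variable {Key : Set Atom} {inv : Atom → Atom} {lvl : Atom → L} {KI : L}

theorem le_singleton_of_deduces (hF : Safe Key inv lvl KI F) {α : Atom} (hα : ¬ lvl α ≤ KI)
    {M : Set (Msg Atom)} {m : Msg Atom} (hm : Deduces Key inv M m) : F α M ≤ F α {m} := by
  by_cases hαm : α ∈ m.atoms
  · exact (hF.2 M m hm α hαm).resolve_right hα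
  · simp [hF.1.singleton_eq_top_of_notMem_atoms hαm]

theorem le_of_forall_deduces (hF : Safe Key inv lvl KI F) {α : Atom} (hα : ¬ lvl α ≤ KI)
    {M N : Set (Msg Atom)} (hN : N.Finite) (hded : ∀ m ∈ N, Deduces Key inv M m) :
    F α M ≤ F α N :=
  hF.1.le_of_forall_le_singleton α hN fun m hm => hF.le_singleton_of_deduces hα (hded m hm)

end Safe

theorem Increasing.inf_le_singleton {lvl : Atom → L} {P : Set (Set (Msg Atom) × Msg Atom)}
    (hInc : Increasing lvl F P) (hF : WellFormed F) {st : Set (Msg Atom) × Msg Atom}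
    (hst : st ∈ P) (α : Atom) : lvl α ⊓ F α st.1 ≤ F α {st.2} := by
  by_cases hα : α ∈ st.2.atoms
  · exact hInc st hst α hα
  · simp [hF.singleton_eq_top_of_notMem_atoms hα]

end Levels

section Knowledge

variable {Atom : Type} (K₀ : Set (Msg Atom)) (tr : List (Set (Msg Atom) × Msg Atom))

@[simp]
theorem knowAfter_zero : knowAfter K₀ tr 0 = K₀ := by
  simp [knowAfter]

theorem knowAfter_succ {i : ℕ} (hi : i < tr.length) :
    knowAfter K₀ tr (i + 1) = knowAfter K₀ tr i ∪ {tr[i].2} := by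
  ext m
  simp only [knowAfter, List.take_add_one, List.getElem?_eq_getElem hi, Option.toList_some,
    List.mem_append, List.mem_singleton, Set.mem_union, Set.mem_ofPred_eq,
    Set.mem_singleton_iff]
  grind

end Knowledge

theorem level_maintained_along_trace_general
    {Atom L : Type} [CompleteLattice L]
    (Key : Set Atom) (inv : Atom → Atom)
    (lvl : Atom → L) (KI : L)
    (F : Atom → Set (Msg Atom) → L) (hF : Safe Key inv lvl KI F)
    (P : Set (Set (Msg Atom) × Msg Atom)) (hPfin : ∀ st ∈ P, st.1.Finite)
    (hInc : Increasing lvl F P)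
    (K₀ : Set (Msg Atom)) (tr : List (Set (Msg Atom) × Msg Atom))
    (htr : ValidTrace Key inv P K₀ tr)
    (α : Atom) (hα : ¬ lvl α ≤ KI) :
    ∀ i ≤ tr.length, lvl α ⊓ F α K₀ ≤ F α (knowAfter K₀ tr i) := by
  intro i hi
  induction i with
  | zero => simp
  | succ i ih =>
    have hi' : i < tr.length := hi
    have hprev := ih hi'.le
    obtain ⟨hstP, hded⟩ := htr i hi'
    simp only [List.get_eq_getElem] at hstP hded
    have hsent : lvl α ⊓ F α K₀ ≤ F α {tr[i].2} :=
      calc lvl α ⊓ F α K₀ ≤ lvl α ⊓ F α (knowAfter K₀ tr i) := le_inf inf_le_left hprev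
        _ ≤ lvl α ⊓ F α tr[i].1 :=
          inf_le_inf_left _ (hF.le_of_forall_deduces hα (hPfin _ hstP) hded)
        _ ≤ F α {tr[i].2} := hInc.inf_le_singleton hF.1 hstP α
    rw [knowAfter_succ K₀ tr hi', hF.1.2.2]
    exact le_inf hprev hsent

/-- Along any valid trace of an `F`-increasing protocol analyzed with a safe function `F`,
the level of an unauthorized atom never drops below `⌜α⌝ ⊓ F(α, K₀)`:
`F(α, Kᵢ) ⊒ ⌜α⌝ ⊓ F(α, K₀)` for every `0 ≤ i ≤ n`. -/
theorem level_maintained_along_trace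
    {Atom L : Type} [Countable Atom] [CompleteLattice L]
    (Key : Set Atom) (inv : Atom → Atom)
    (hinv : ∀ k ∈ Key, inv k ∈ Key ∧ inv (inv k) = k)
    (lvl : Atom → L) (KI : L)
    (F : Atom → Set (Msg Atom) → L) (hF : Safe Key inv lvl KI F)
    (P : Set (Set (Msg Atom) × Msg Atom)) (hPfin : ∀ st ∈ P, st.1.Finite)
    (hInc : Increasing lvl F P)
    (K₀ : Set (Msg Atom)) (tr : List (Set (Msg Atom) × Msg Atom))
    (htr : ValidTrace Key inv P K₀ tr)
    (α : Atom) (hα : ¬ lvl α ≤ KI) :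
    ∀ i ≤ tr.length, lvl α ⊓ F α K₀ ≤ F α (knowAfter K₀ tr i) :=
  level_maintained_along_trace_general Key inv lvl KI F hF P hPfin hInc K₀ tr htr α hα
end

section
/- Let F be a safe function, α an atom with ¬(⌜K(I)⌝ ⊒ ⌜α⌝), M a set of messages, and M' a finite set of messages each of which is deducible from M (M ⊢ m' for every m' ∈ M'). Then F(α, M ∪ M') = F(α, M): extending the intruder's knowledge by messages he can already deduce does not lower the security level F assigns to an unauthorized atom. -/
namespace WellFormed

variable {Atom L : Type} [CompleteLattice L] {F : Atom → Set (Msg Atom) → L}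

theorem apply_empty (hF : WellFormed F) (α : Atom) : F α ∅ = ⊤ :=
  hF.2.1 α ∅ (by simp [atomsOf])

theorem apply_singleton_of_notMem (hF : WellFormed F) {α : Atom} {m : Msg Atom}
    (hα : α ∉ m.atoms) : F α {m} = ⊤ :=
  hF.2.1 α {m} (by simpa [atomsOf] using hα)

theorem union_eq_left_of_le (hF : WellFormed F) {α : Atom} {M N : Set (Msg Atom)}
    (h : F α M ≤ F α N) : F α (M ∪ N) = F α M := by
  rw [hF.2.2, inf_eq_left.mpr h]

theorem le_of_forall_le_singleton_s3 (hF : WellFormed F) {α : Atom} {a : L}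
    {N : Set (Msg Atom)} (hN : N.Finite) (h : ∀ m ∈ N, a ≤ F α {m}) : a ≤ F α N := by
  induction N, hN using Set.Finite.induction_on with
  | empty => simp [hF.apply_empty]
  | @insert m S _ _ ih =>
    rw [Set.insert_eq, hF.2.2]
    exact le_inf (h m (Set.mem_insert m S)) (ih fun m' hm' => h m' (Set.mem_insert_of_mem m hm'))

end WellFormed

theorem Safe.le_apply_singleton_of_deduces {Atom L : Type} [CompleteLattice L]
    {Key : Set Atom} {inv : Atom → Atom} {lvl : Atom → L} {KI : L}
    {F : Atom → Set (Msg Atom) → L} (hF : Safe Key inv lvl KI F)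
    {α : Atom} (hα : ¬ lvl α ≤ KI) {M : Set (Msg Atom)} {m : Msg Atom}
    (hm : Deduces Key inv M m) : F α M ≤ F α {m} := by
  by_cases hαm : α ∈ m.atoms
  · exact (hF.2 M m hm α hαm).resolve_right hα
  · simp [hF.1.apply_singleton_of_notMem hαm]

theorem level_invariant_under_deducible_extension_general
    {Atom L : Type} [CompleteLattice L]
    (Key : Set Atom) (inv : Atom → Atom)
    (lvl : Atom → L) (KI : L)
    (F : Atom → Set (Msg Atom) → L) (hF : Safe Key inv lvl KI F)
    (α : Atom) (hα : ¬ lvl α ≤ KI)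
    (M M' : Set (Msg Atom)) (hM'fin : M'.Finite)
    (hded : ∀ m' ∈ M', Deduces Key inv M m') :
    F α (M ∪ M') = F α M :=
  hF.1.union_eq_left_of_le <| hF.1.le_of_forall_le_singleton_s3 hM'fin fun m' hm' =>
    hF.le_apply_singleton_of_deduces hα (hded m' hm')

/-- Extending the intruder's knowledge by a finite set of messages he can already
deduce does not change the level a safe function assigns to an unauthorized atom:
`F(α, M ∪ M') = F(α, M)`. -/
theorem level_invariant_under_deducible_extension
    {Atom L : Type} [Countable Atom] [CompleteLattice L]
    (Key : Set Atom) (inv : Atom → Atom)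
    (hinv : ∀ k ∈ Key, inv k ∈ Key ∧ inv (inv k) = k)
    (lvl : Atom → L) (KI : L)
    (F : Atom → Set (Msg Atom) → L) (hF : Safe Key inv lvl KI F)
    (α : Atom) (hα : ¬ lvl α ≤ KI)
    (M M' : Set (Msg Atom)) (hM'fin : M'.Finite)
    (hded : ∀ m' ∈ M', Deduces Key inv M m') :
    F α (M ∪ M') = F α M :=
  level_invariant_under_deducible_extension_general Key inv lvl KI F hF α hα M M' hM'fin hded
end

section
/- Static condition implies increasing: let F : Atom → Set Msg → L be any function, p a protocol with variables, and T a set of messages with pairwise disjoint variables among distinct elements such that for every step (R⁻, r⁺) ∈ p, r⁺ ∈ T and R⁻ ⊆ T; let W be the witness function for T, extended to a finite set M of ground messages by W(α, M) := ⊓_{t ∈ M} W(α, t). If for every step (R⁻, r⁺) ∈ p, every substitution σ and every atom α we have ⊓ { G_F(α, m', σ') : m' ∈ T, σ' a substitution with m'σ' = r⁺σ' } ⊒ ⌜α⌝ ⊓ ⊓_{m ∈ R⁻} G_F(α, m, σ), then for every step (R⁻, r⁺) ∈ p, every substitution σ and every atom α: W(α, r⁺σ) ⊒ ⌜α⌝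 ⊓ W(α, R⁻σ), i.e. the ground instantiation of p is W-increasing. -/
open scoped Classical in
/-- Homomorphic application `mσ` of a substitution `σ` on the variables `Var`. -/
noncomputable def Msg.subst {Atom : Type} (Var : Set Atom) (σ : Atom → Msg Atom) :
    Msg Atom → Msg Atom
  | .atom a => if a ∈ Var then σ a else .atom a
  | .pair m₁ m₂ => .pair (Msg.subst Var σ m₁) (Msg.subst Var σ m₂)
  | .enc m k => .enc (Msg.subst Var σ m) k

/-- A message is ground if no variable occurs in it. -/
def Ground {Atom : Type} (Var : Set Atom) (m : Msg Atom) : Prop :=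
  ∀ a ∈ m.atoms, a ∉ Var

/-- A substitution assigns a ground message to every variable. -/
def IsSubst {Atom : Type} (Var : Set Atom) (σ : Atom → Msg Atom) : Prop :=
  ∀ X ∈ Var, Ground Var (σ X)

open scoped Classical in
/-- `derivE Var ε S m`: replace in `m` every variable not in `S` by the constant `ε`.
`derivE Var ε ∅ m` is the full derivative `∂m`, and `derivE Var ε {X} m` is `∂[X̄]m`. -/
noncomputable def derivE {Atom : Type} (Var : Set Atom) (ε : Atom) (S : Set Atom) :
    Msg Atom → Msg Atom
  | .atom a => if a ∈ Var ∧ a ∉ S then .atom ε else .atom a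
  | .pair m₁ m₂ => .pair (derivE Var ε S m₁) (derivE Var ε S m₂)
  | .enc m k => .enc (derivE Var ε S m) k

open scoped Classical in
/-- The derivative evaluation `G_F(α, m, σ)`: evaluate `F` on `∂m` if `α` occurs there,
on `∂[X̄]m` if `α` comes from the unique variable `X` of `m` with `σ(X) = atom α`,
and `⊤` otherwise. -/
noncomputable def derivEval {Atom L : Type} [CompleteLattice L]
    (Var : Set Atom) (ε : Atom) (F : Atom → Set (Msg Atom) → L)
    (α : Atom) (m : Msg Atom) (σ : Atom → Msg Atom) : L :=
  if α ∈ (derivE Var ε ∅ m).atoms then F α {derivE Var ε ∅ m}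
  else if h : ∃! X, X ∈ Var ∧ X ∈ m.atoms ∧ σ X = Msg.atom α then
    F h.choose {derivE Var ε {h.choose} m}
  else ⊤

/-- The witness function for the set of patterns `T`, on a ground message `t`:
the meet of the derivative evaluations over all sources `(m', σ')` of `t` in `T`. -/
noncomputable def witness {Atom L : Type} [CompleteLattice L]
    (Var : Set Atom) (ε : Atom) (F : Atom → Set (Msg Atom) → L)
    (T : Set (Msg Atom)) (α : Atom) (t : Msg Atom) : L :=
  sInf { l | ∃ m' ∈ T, ∃ σ', IsSubst Var σ' ∧ Msg.subst Var σ' m' = t ∧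
              l = derivEval Var ε F α m' σ' }


/-!
Each received pattern `m ∈ R⁻` is a source of `mσ` in `T`, so `W(α, R⁻σ)` is below
`⊓_{m ∈ R⁻} G_F(α, m, σ)`, which the static condition bounds. On the sent side, a source
`(m', σ')` of `r⁺σ` constrains `σ'` only on the variables of `m'`; gluing `σ'` there with `σ`
elsewhere gives a unifier `σ''` of `m'` and `r⁺` (distinct patterns share no variables) with
`G_F(α, m', σ'') = G_F(α, m', σ')`, so the static bound lies below every term of `W(α, r⁺σ)`.
-/

open scoped Classical

variable {Atom L : Type} [CompleteLattice L] {Var : Set Atom} {ε : Atom}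
  {F : Atom → Set (Msg Atom) → L} {T : Set (Msg Atom)} {α : Atom}

theorem Msg.subst_congr {σ₁ σ₂ : Atom → Msg Atom} :
    ∀ {m : Msg Atom}, (∀ a ∈ m.atoms, a ∈ Var → σ₁ a = σ₂ a) →
      m.subst Var σ₁ = m.subst Var σ₂
  | .atom a, h => by
    by_cases ha : a ∈ Var
    · simp only [Msg.subst, if_pos ha]; exact h a rfl ha
    · simp only [Msg.subst, if_neg ha]
  | .pair m₁ m₂, h => by
    simp only [Msg.subst, Msg.subst_congr fun a ha => h a (Or.inl ha),
      Msg.subst_congr fun a ha => h a (Or.inr ha)]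
  | .enc m k, h => by
    simp only [Msg.subst, Msg.subst_congr fun a ha => h a (Or.inl ha)]

theorem IsSubst.piecewise {σ₁ σ₂ : Atom → Msg Atom} (h₁ : IsSubst Var σ₁)
    (h₂ : IsSubst Var σ₂) (s : Set Atom) : IsSubst Var (s.piecewise σ₁ σ₂) := by
  intro X hX
  by_cases hs : X ∈ s
  · simpa only [Set.piecewise_eq_of_mem _ _ _ hs] using h₁ X hX
  · simpa only [Set.piecewise_eq_of_notMem _ _ _ hs] using h₂ X hX

theorem dite_existsUnique_congr {α β : Type*} {P Q : α → Prop} (h : ∀ x, P x ↔ Q x)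
    (f : α → β) (d : β) :
    (if hP : ∃! x, P x then f hP.choose else d) = if hQ : ∃! x, Q x then f hQ.choose else d := by
  obtain rfl : P = Q := funext fun x => propext (h x)
  rfl

theorem derivEval_congr {m : Msg Atom} {σ₁ σ₂ : Atom → Msg Atom}
    (h : ∀ a ∈ m.atoms, a ∈ Var → σ₁ a = σ₂ a) :
    derivEval Var ε F α m σ₁ = derivEval Var ε F α m σ₂ := by
  unfold derivEval
  congr 1
  exact dite_existsUnique_congr (fun X => and_congr_right fun hX => and_congr_right fun hXm => by
    rw [h X hXm hX]) (fun X => F X {derivE Var ε {X} m}) ⊤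

theorem witness_subst_le_derivEval {m : Msg Atom} {σ : Atom → Msg Atom} (hm : m ∈ T)
    (hσ : IsSubst Var σ) : witness Var ε F T α (m.subst Var σ) ≤ derivEval Var ε F α m σ :=
  sInf_le ⟨m, hm, σ, hσ, rfl, rfl⟩

theorem iInf_witness_image_subst_le {R : Set (Msg Atom)} {σ : Atom → Msg Atom} (hR : R ⊆ T)
    (hσ : IsSubst Var σ) :
    ⨅ t ∈ Msg.subst Var σ '' R, witness Var ε F T α t ≤ ⨅ m ∈ R, derivEval Var ε F α m σ := by
  rw [iInf_image]
  exact iInf₂_mono fun m hm => witness_subst_le_derivEval (hR hm) hσ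

variable (Var ε F T α) in
/-- The right-hand side of the static condition. -/
noncomputable def unifierWitness (r : Msg Atom) : L :=
  sInf { l | ∃ m' ∈ T, ∃ σ', IsSubst Var σ' ∧ Msg.subst Var σ' m' = Msg.subst Var σ' r ∧
              l = derivEval Var ε F α m' σ' }

theorem unifierWitness_le_witness_subst
    (hT : ∀ m₁ ∈ T, ∀ m₂ ∈ T, m₁ ≠ m₂ → Disjoint (m₁.atoms ∩ Var) (m₂.atoms ∩ Var))
    {r : Msg Atom} (hr : r ∈ T) {σ : Atom → Msg Atom} (hσ : IsSubst Var σ) :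
    unifierWitness Var ε F T α r ≤ witness Var ε F T α (r.subst Var σ) := by
  refine le_sInf ?_
  rintro _ ⟨m', hm'T, σ', hσ', hsource, rfl⟩
  set σ'' := m'.atoms.piecewise σ' σ
  have hσ''_on_m' : ∀ a ∈ m'.atoms, a ∈ Var → σ'' a = σ' a :=
    fun a ha _ => Set.piecewise_eq_of_mem _ _ _ ha
  have hm'σ'' : m'.subst Var σ'' = m'.subst Var σ' := Msg.subst_congr hσ''_on_m'
  have hrσ'' : r.subst Var σ'' = r.subst Var σ := by
    rcases eq_or_ne m' r with rfl | hne
    · rw [hm'σ'', hsource]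
    · refine Msg.subst_congr fun a ha haVar => Set.piecewise_eq_of_notMem _ _ _ fun ha' => ?_
      exact Set.disjoint_left.mp (hT m' hm'T r hr hne) ⟨ha', haVar⟩ ⟨ha, haVar⟩
  calc unifierWitness Var ε F T α r ≤ derivEval Var ε F α m' σ'' :=
        sInf_le ⟨m', hm'T, σ'', hσ'.piecewise hσ _, by rw [hm'σ'', hsource, hrσ''], rfl⟩
    _ = derivEval Var ε F α m' σ' := derivEval_congr hσ''_on_m'

theorem static_condition_implies_increasing_general
    {Atom L : Type} [CompleteLattice L]
    (Var : Set Atom)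
    (ε : Atom)
    (lvl : Atom → L)
    (F : Atom → Set (Msg Atom) → L)
    (p : Set (Set (Msg Atom) × Msg Atom))
    (T : Set (Msg Atom))
    (hT : ∀ m₁ ∈ T, ∀ m₂ ∈ T, m₁ ≠ m₂ → Disjoint (m₁.atoms ∩ Var) (m₂.atoms ∩ Var))
    (hcov : ∀ st ∈ p, st.2 ∈ T ∧ st.1 ⊆ T)
    (hstatic : ∀ st ∈ p, ∀ σ : Atom → Msg Atom, IsSubst Var σ → ∀ α : Atom,
      lvl α ⊓ (⨅ m ∈ st.1, derivEval Var ε F α m σ) ≤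
        sInf { l | ∃ m' ∈ T, ∃ σ', IsSubst Var σ' ∧
                Msg.subst Var σ' m' = Msg.subst Var σ' st.2 ∧
                l = derivEval Var ε F α m' σ' }) :
    ∀ st ∈ p, ∀ σ : Atom → Msg Atom, IsSubst Var σ → ∀ α : Atom,
      lvl α ⊓ (⨅ t ∈ Msg.subst Var σ '' st.1, witness Var ε F T α t) ≤
        witness Var ε F T α (Msg.subst Var σ st.2) := by
  intro st hst σ hσ α
  calc lvl α ⊓ ⨅ t ∈ Msg.subst Var σ '' st.1, witness Var ε F T α t
      ≤ lvl α ⊓ ⨅ m ∈ st.1, derivEval Var ε F α m σ :=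
        inf_le_inf_left _ (iInf_witness_image_subst_le (hcov st hst).2 hσ)
    _ ≤ unifierWitness Var ε F T α st.2 := hstatic st hst σ hσ α
    _ ≤ witness Var ε F T α (st.2.subst Var σ) :=
        unifierWitness_le_witness_subst hT (hcov st hst).1 hσ

/-- **Static condition implies increasing.** If the static lower-bound condition holds on
every step of a protocol with variables, then every ground instantiation of every step is
increasing for the witness function `W` (extended to sets of ground messages by meets). -/
theorem static_condition_implies_increasing
    {Atom L : Type} [Countable Atom] [CompleteLattice L]
    (Var Key : Set Atom) (hVK : Disjoint Var Key)
    (ε : Atom) (hε : ε ∉ Var ∪ Key)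
    (lvl : Atom → L)
    (F : Atom → Set (Msg Atom) → L)
    (p : Set (Set (Msg Atom) × Msg Atom)) (hpfin : ∀ st ∈ p, st.1.Finite)
    (T : Set (Msg Atom))
    (hT : ∀ m₁ ∈ T, ∀ m₂ ∈ T, m₁ ≠ m₂ → Disjoint (m₁.atoms ∩ Var) (m₂.atoms ∩ Var))
    (hcov : ∀ st ∈ p, st.2 ∈ T ∧ st.1 ⊆ T)
    (hstatic : ∀ st ∈ p, ∀ σ : Atom → Msg Atom, IsSubst Var σ → ∀ α : Atom,
      lvl α ⊓ (⨅ m ∈ st.1, derivEval Var ε F α m σ) ≤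
        sInf { l | ∃ m' ∈ T, ∃ σ', IsSubst Var σ' ∧
                Msg.subst Var σ' m' = Msg.subst Var σ' st.2 ∧
                l = derivEval Var ε F α m' σ' }) :
    ∀ st ∈ p, ∀ σ : Atom → Msg Atom, IsSubst Var σ → ∀ α : Atom,
      lvl α ⊓ (⨅ t ∈ Msg.subst Var σ '' st.1, witness Var ε F T α t) ≤
        witness Var ε F T α (Msg.subst Var σ st.2) :=
  static_condition_implies_increasing_general Var ε lvl F p T hT hcov hstatic
end
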